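/- arXiv:2003.11254 — 4 statements merged into one kernel-verified Lean document; each statement's English description precedes it below -/
import Mathlib

section
/- Let C be a nonempty closed convex subset of a real normed linear space X having the strong separation property, and assume at least one of the following conditions holds: (A) X is a reflexive Banach space and Int barc(C) ≠ ∅; (B) C is locally compact; (C) there exist r > 0 and a finite-dimensional linear subspace Z ⊆ X with C ⊆ B(0; r) + Z. Then barc(C) = Int barc(C) ∪ {0}, i.e. every nonzero element of barc(C) lies in the interior of barc(C). -/
open Filter Topology Pointwise

/-- The barrier cone of a set `C` in a normed space. -/
def barrierCone {X : Type*} [NormedAddCommGroup X] [NormedSpace ℝ X] (C : Set X) :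
    Set (X →L[ℝ] ℝ) :=
  {f | ∃ b : ℝ, ∀ c ∈ C, f c ≤ b}

/-- `C` and `D` are strongly separated: there is a nonzero continuous linear functional whose
supremum over `C` is strictly smaller than its infimum over `D`. -/
def StronglySeparated {X : Type*} [NormedAddCommGroup X] [NormedSpace ℝ X]
    (C D : Set X) : Prop :=
  ∃ f : X →L[ℝ] ℝ, f ≠ 0 ∧ ∃ a b : ℝ, a < b ∧ (∀ c ∈ C, f c ≤ a) ∧ ∀ d ∈ D, b ≤ f d

/-- `C` has the strong separation property: it can be strongly separated from every nonempty
closed convex set disjoint from it. -/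
def StrongSepProperty {X : Type*} [NormedAddCommGroup X] [NormedSpace ℝ X]
    (C : Set X) : Prop :=
  ∀ D : Set X, D.Nonempty → IsClosed D → Convex ℝ D → Disjoint C D → StronglySeparated C D

/-!
Let `f ≠ 0` lie in `barc C` but not in its interior. Strong separation of `C` from the half-space
`{f ≥ sup f(C)}` shows that `f` attains its supremum on `C`, at `p` say. Since `f` is a limit of
functionals unbounded above on `C`, there are `c n ∈ C` with `‖c n‖ → ∞` and
`f (c n / ‖c n‖) → 0`. Each of (A), (B), (C) provides a nonzero weak cluster point `d` of the
directions `c n / ‖c n‖`: by Banach–Alaoglu in case (A), where Baire's theorem gives a functional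
`h` with `h + ρ ‖·‖` bounded above on `C` that keeps `d` away from `0`, and by compactness of
`C ∩ closedBall c₀ r`, resp. of the unit ball of `Z`, otherwise. Such a `d` is a recession
direction of `C` with `f d = 0`, so the ray `p + ℝ≥0 d` lies in `C`. For `h d = 1`, the closed
convex region `h (x - p) * f (x - p) ≥ 1`, `h (x - p) > 0` is disjoint from `C` yet asymptotic to
that ray, so it cannot be strongly separated from `C`.
-/

open Set Metric NormedSpace

theorem MapClusterPt.of_tendsto_sub {α E : Type*} [SeminormedAddCommGroup E] {l : Filter α}
    {u v : α → E} {x : E} (hx : MapClusterPt x l u) (huv : Tendsto (v - u) l (𝓝 0)) :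
    MapClusterPt x l v := by
  rw [nhds_basis_ball.mapClusterPt_iff_frequently] at hx ⊢
  intro ε hε
  refine ((hx (ε / 2) (half_pos hε)).and_eventually
    (huv.eventually (ball_mem_nhds 0 (half_pos hε)))).mono fun n ⟨hu, huv⟩ => ?_
  rw [dist_zero_right, Pi.sub_apply, ← dist_eq_norm] at huv
  rw [mem_ball] at hu ⊢
  linarith [dist_triangle (v n) (u n) x]

theorem tendsto_norm_sub_atTop {α E : Type*} [SeminormedAddCommGroup E] {l : Filter α} {u : α → E}
    (hu : Tendsto (fun n => ‖u n‖) l atTop) (p : E) : Tendsto (fun n => ‖u n - p‖) l atTop :=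
  tendsto_atTop_mono (fun n => norm_sub_norm_le (u n) p) (tendsto_atTop_add_const_right _ _ hu)

theorem pos_of_forall_two_mul_le_sq_mul_add {a b : ℝ} (h : ∀ l > 0, 2 * l ≤ l ^ 2 * a + b) :
    0 < b := by
  rcases le_or_gt a 0 with ha | ha
  · nlinarith [h 1 one_pos]
  · have := h a⁻¹ (inv_pos.2 ha)
    rw [sq, mul_assoc, inv_mul_cancel₀ ha.ne', mul_one] at this
    linarith [inv_pos.2 ha]

theorem two_mul_le_sq_mul_add_inv (l : ℝ) {t : ℝ} (ht : 0 < t) : 2 * l ≤ l ^ 2 * t + t⁻¹ := by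
  have : l ^ 2 * t + t⁻¹ - 2 * l = (l * t - 1) ^ 2 / t := by field_simp; ring
  nlinarith [div_nonneg (sq_nonneg (l * t - 1)) ht.le]

section

variable {X : Type*} [NormedAddCommGroup X] [NormedSpace ℝ X]

theorem norm_inv_norm_smul_le_one (x : X) : ‖‖x‖⁻¹ • x‖ ≤ 1 := by
  rw [norm_smul, norm_inv, norm_norm]
  exact inv_mul_le_one_of_le₀ le_rfl (norm_nonneg x)

theorem norm_inv_norm_smul_sub_inv_norm_smul_le {u : X} (hu : u ≠ 0) (v : X) :
    ‖‖u‖⁻¹ • u - ‖v‖⁻¹ • v‖ ≤ 2 * ‖u - v‖ / ‖u‖ := by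
  have hu₀ : 0 < ‖u‖ := norm_pos_iff.2 hu
  have hsplit : ‖u‖⁻¹ • u - ‖v‖⁻¹ • v
      = ‖u‖⁻¹ • (u - v) + (‖u‖⁻¹ * (‖v‖ - ‖u‖)) • (‖v‖⁻¹ • v) := by
    rcases eq_or_ne v 0 with rfl | hv
    · simp
    · have : ‖v‖ ≠ 0 := norm_ne_zero_iff.2 hv
      match_scalars <;> field_simp
      ring
  calc ‖‖u‖⁻¹ • u - ‖v‖⁻¹ • v‖
      ≤ ‖u‖⁻¹ * ‖u - v‖ + ‖u‖⁻¹ * |‖v‖ - ‖u‖| * ‖‖v‖⁻¹ • v‖ := by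
        rw [hsplit]
        refine (norm_add_le _ _).trans_eq ?_
        rw [norm_smul, norm_smul, norm_mul, norm_inv, norm_norm, Real.norm_eq_abs]
    _ ≤ ‖u‖⁻¹ * ‖u - v‖ + ‖u‖⁻¹ * ‖u - v‖ * 1 := by
        gcongr
        · rw [abs_sub_comm]; exact abs_norm_sub_norm_le u v
        · exact norm_inv_norm_smul_le_one v
    _ = 2 * ‖u - v‖ / ‖u‖ := by ring

theorem tendsto_inv_norm_smul_sub_inv_norm_smul {α : Type*} {l : Filter α} {u v : α → X}
    {K : ℝ} (hu : Tendsto (fun n => ‖u n‖) l atTop) (huv : ∀ n, ‖u n - v n‖ ≤ K) :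
    Tendsto (fun n => ‖u n‖⁻¹ • u n - ‖v n‖⁻¹ • v n) l (𝓝 0) := by
  refine squeeze_zero_norm' ?_ ((tendsto_const_nhds (x := 2 * K)).div_atTop hu)
  filter_upwards [hu.eventually_gt_atTop 0] with n hn
  calc _ ≤ 2 * ‖u n - v n‖ / ‖u n‖ := norm_inv_norm_smul_sub_inv_norm_smul_le (norm_pos_iff.1 hn) _
    _ ≤ 2 * K / ‖u n‖ := by gcongr; exact huv n

theorem norm_eq_one_of_mapClusterPt_inv_norm_smul {α : Type*} {l : Filter α} {u : α → X} {d : X}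
    (hu : Tendsto (fun n => ‖u n‖) l atTop) (hd : MapClusterPt d l fun n => ‖u n‖⁻¹ • u n) :
    ‖d‖ = 1 := by
  refine mem_sphere_zero_iff_norm.1 (isClosed_sphere.mem_of_mapClusterPt hd ?_)
  filter_upwards [hu.eventually_gt_atTop 0] with n hn
  rw [mem_sphere_zero_iff_norm, norm_smul, norm_inv, norm_norm, inv_mul_cancel₀ hn.ne']

theorem Convex.add_smul_inv_norm_smul_sub_mem {C : Set X} (hC : Convex ℝ C) {p q : X}
    (hp : p ∈ C) (hq : q ∈ C) {t : ℝ} (ht₀ : 0 ≤ t) (ht : t ≤ ‖q - p‖) :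
    p + t • (‖q - p‖⁻¹ • (q - p)) ∈ C := by
  rw [smul_smul]
  exact hC.add_smul_sub_mem hp hq ⟨by positivity, by
    rw [← div_eq_mul_inv]; exact div_le_one_of_le₀ ht (norm_nonneg _)⟩

theorem IsClosed.add_smul_mem_of_forall_mapClusterPt {C : Set X} (hcl : IsClosed C)
    (hconv : Convex ℝ C) {p d : X} (hp : p ∈ C) {c : ℕ → X} (hc : ∀ n, c n ∈ C)
    (hnorm : Tendsto (fun n => ‖c n‖) atTop atTop)
    (hd : ∀ g : X →L[ℝ] ℝ, MapClusterPt (g d) atTop fun n => g (‖c n‖⁻¹ • c n))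
    {t : ℝ} (ht : 0 ≤ t) : p + t • d ∈ C := by
  by_contra hmem
  obtain ⟨g, a, hgC, hga⟩ := geometric_hahn_banach_closed_point hconv hcl hmem
  have hdist := tendsto_norm_sub_atTop hnorm p
  have hdir : Tendsto (fun n => g (‖c n - p‖⁻¹ • (c n - p)) - g (‖c n‖⁻¹ • c n)) atTop (𝓝 0) := by
    have := (g.continuous.tendsto 0).comp <|
      tendsto_inv_norm_smul_sub_inv_norm_smul hdist (K := ‖p‖) fun n => by
        rw [sub_sub_cancel_left, norm_neg]
    simpa only [Function.comp_def, map_sub, map_zero] using this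
  have hcluster : MapClusterPt (g p + t * g d) atTop
      fun n => g p + t * g (‖c n - p‖⁻¹ • (c n - p)) :=
    ((hd g).of_tendsto_sub hdir).tendsto_comp (f := fun r => g p + t * r)
      ((continuous_const.add (continuous_const.mul continuous_id)).tendsto (g d))
  have hle : g p + t * g d ≤ a := by
    refine isClosed_Iic.mem_of_mapClusterPt hcluster ?_
    filter_upwards [hdist.eventually_ge_atTop t] with n hn
    have := hgC _ (hconv.add_smul_inv_norm_smul_sub_mem hp (hc n) ht hn)
    rw [map_add, map_smul, smul_eq_mul] at this
    exact this.le
  simp only [map_add, map_smul, smul_eq_mul] at hga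
  linarith

theorem StronglySeparated.exists_pos_le_norm_sub {C D : Set X} (h : StronglySeparated C D) :
    ∃ δ > 0, ∀ x ∈ C, ∀ y ∈ D, δ ≤ ‖y - x‖ := by
  obtain ⟨g, hg0, a, b, hab, hC, hD⟩ := h
  have hg : 0 < ‖g‖ := norm_pos_iff.2 hg0
  refine ⟨(b - a) / ‖g‖, div_pos (sub_pos.2 hab) hg, fun x hx y hy => ?_⟩
  rw [div_le_iff₀' hg]
  calc b - a ≤ g y - g x := by linarith [hC x hx, hD y hy]
    _ = g (y - x) := (map_sub g y x).symm
    _ ≤ ‖g‖ * ‖y - x‖ := (le_abs_self _).trans (g.le_opNorm _)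

theorem ContinuousLinearMap.exists_eq_one {f : X →L[ℝ] ℝ} (hf : f ≠ 0) : ∃ u, f u = 1 := by
  obtain ⟨v, hv⟩ := DFunLike.ne_iff.1 hf
  exact ⟨(f v)⁻¹ • v, by simp [inv_mul_cancel₀ hv]⟩

theorem StrongSepProperty.exists_isMaxOn {C : Set X} (hsep : StrongSepProperty C)
    (hne : C.Nonempty) {f : X →L[ℝ] ℝ} (hf0 : f ≠ 0) (hf : f ∈ barrierCone C) :
    ∃ c ∈ C, IsMaxOn f C c := by
  obtain ⟨u, hu⟩ := ContinuousLinearMap.exists_eq_one hf0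
  have hbdd : BddAbove (f '' C) := by
    obtain ⟨b, hb⟩ := hf
    exact ⟨b, forall_mem_image.2 hb⟩
  set s := sSup (f '' C)
  by_contra! hmax
  have hlt : ∀ c ∈ C, f c < s := fun c hc =>
    (le_csSup hbdd (mem_image_of_mem f hc)).lt_of_ne fun hcs => hmax c hc fun x hx =>
      hcs ▸ le_csSup hbdd (mem_image_of_mem f hx)
  let D := {x | s ≤ f x}
  obtain ⟨δ, hδ, hD⟩ := StronglySeparated.exists_pos_le_norm_sub <|
    hsep D ⟨s • u, by simp [D, hu]⟩ (isClosed_le continuous_const f.continuous)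
      (convex_halfSpace_ge f.isLinear s)
      (disjoint_left.2 fun c hc hcD => (hlt c hc).not_ge hcD)
  have hε : 0 < δ / (‖u‖ + 1) := by positivity
  obtain ⟨_, ⟨c, hc, rfl⟩, hfc⟩ := exists_lt_of_lt_csSup (hne.image f) (sub_lt_self s hε)
  have hgap := hD c hc (c + (s - f c) • u) (by simp [D, hu])
  rw [add_sub_cancel_left, norm_smul, Real.norm_of_nonneg (sub_pos.2 (hlt c hc)).le] at hgap
  have : (s - f c) * ‖u‖ < δ :=
    calc (s - f c) * ‖u‖ ≤ δ / (‖u‖ + 1) * ‖u‖ := by gcongr; linarith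
      _ < δ := by rw [div_mul_eq_mul_div, div_lt_iff₀ (by positivity)]; nlinarith [norm_nonneg u]
  linarith

theorem StrongSepProperty.eq_zero_of_isMaxOn_of_forall_add_smul_mem {C : Set X}
    (hsep : StrongSepProperty C) {f : X →L[ℝ] ℝ} (hf0 : f ≠ 0) {p d : X}
    (hmax : IsMaxOn f C p) (hfd : f d = 0) (hd : ∀ t : ℝ, 0 ≤ t → p + t • d ∈ C) : d = 0 := by
  by_contra hd0
  obtain ⟨h, hhd⟩ := SeparatingDual.exists_eq_one (R := ℝ) hd0
  obtain ⟨u₀, hu₀⟩ := ContinuousLinearMap.exists_eq_one hf0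
  set u := u₀ - h u₀ • d
  have hfu : f u = 1 := by simp [u, hfd, hu₀]
  have hhu : h u = 0 := by simp [u, hhd]
  -- `D` is the region `h (x - p) * f (x - p) ≥ 1`, `h (x - p) > 0`, written as an intersection
  -- of closed half-spaces.
  let φ : ℝ → X →L[ℝ] ℝ := fun l => l ^ 2 • h + f
  have hφ : ∀ l x, φ l (p + x) = φ l p + (l ^ 2 * h x + f x) := by
    intro l x; simp [φ]; ring
  let D := ⋂ l ∈ Ioi (0 : ℝ), {x | 2 * l + φ l p ≤ φ l x}
  have hmemD : ∀ t : ℝ, 0 < t → p + (t • d + t⁻¹ • u) ∈ D := by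
    intro t ht
    simp only [D, mem_iInter₂, mem_Ioi, mem_ofPred_eq, hφ, map_add, map_smul, smul_eq_mul, hhd,
      hhu, hfd, hfu]
    intro l _
    linarith [two_mul_le_sq_mul_add_inv l ht]
  have hdisj : Disjoint C D := by
    refine disjoint_left.2 fun x hx hxD => ?_
    have key : ∀ l > 0, 2 * l ≤ l ^ 2 * h (x - p) + f (x - p) := fun l hl => by
      have := mem_iInter₂.1 hxD l hl
      rw [mem_ofPred_eq, ← add_sub_cancel p x, hφ] at this
      linarith
    have := pos_of_forall_two_mul_le_sq_mul_add key
    rw [map_sub] at this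
    linarith [isMaxOn_iff.1 hmax x hx]
  obtain ⟨δ, hδ, hgap⟩ := StronglySeparated.exists_pos_le_norm_sub <|
    hsep D ⟨_, hmemD 1 one_pos⟩
      (isClosed_biInter fun l _ => isClosed_le continuous_const (φ l).continuous)
      (convex_iInter₂ fun l _ => convex_halfSpace_ge (φ l).isLinear _) hdisj
  set t := (‖u‖ + 1) / δ
  have ht : 0 < t := by positivity
  have := hgap _ (hd t ht.le) _ (hmemD t ht)
  rw [← add_assoc, add_sub_cancel_left, norm_smul, norm_inv, Real.norm_of_nonneg ht.le,
    inv_div, div_mul_eq_mul_div, le_div_iff₀ (by positivity)] at this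
  nlinarith

theorem exists_lt_add_mul_norm_of_notMem_interior_barrierCone {C : Set X} {f : X →L[ℝ] ℝ}
    (hf : f ∉ interior (barrierCone C)) {ε : ℝ} (hε : 0 < ε) (M : ℝ) :
    ∃ c ∈ C, M < f c + ε * ‖c‖ := by
  obtain ⟨g, hg, hgC⟩ := not_subset.1 fun h =>
    hf (mem_interior_iff_mem_nhds.2 (Metric.mem_nhds_iff.2 ⟨ε, hε, h⟩))
  simp only [barrierCone, mem_ofPred_eq, not_exists, not_forall, not_le] at hgC
  obtain ⟨c, hc, hMc⟩ := hgC M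
  refine ⟨c, hc, hMc.trans_le ?_⟩
  have hgf : g c - f c ≤ ‖g - f‖ * ‖c‖ := (le_abs_self _).trans ((g - f).le_opNorm c)
  have : ‖g - f‖ ≤ ε := (dist_eq_norm g f ▸ mem_ball.1 hg).le
  nlinarith [norm_nonneg c]

theorem exists_seq_of_notMem_interior_barrierCone {C : Set X} {f : X →L[ℝ] ℝ}
    (hf : f ∈ barrierCone C) (hint : f ∉ interior (barrierCone C)) :
    ∃ c : ℕ → X, (∀ n, c n ∈ C) ∧ Tendsto (fun n => ‖c n‖) atTop atTop ∧
      Tendsto (fun n => f (‖c n‖⁻¹ • c n)) atTop (𝓝 0) := by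
  obtain ⟨s, hs⟩ := hf
  choose c hc hlt using fun n : ℕ =>
    exists_lt_add_mul_norm_of_notMem_interior_barrierCone hint (Nat.one_div_pos_of_nat (n := n))
      (|s| + 1)
  have hnorm : ∀ n : ℕ, (n : ℝ) + 1 ≤ ‖c n‖ := fun n => by
    have := hlt n
    have : 1 < ‖c n‖ / (n + 1) := by
      rw [one_div_mul_eq_div] at this; linarith [le_abs_self s, hs _ (hc n)]
    rw [lt_div_iff₀ (by positivity)] at this
    linarith
  have hnorm_top : Tendsto (fun n => ‖c n‖) atTop atTop :=
    tendsto_atTop_mono hnorm (tendsto_atTop_add_const_right _ 1 tendsto_natCast_atTop_atTop)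
  have hpos : ∀ n, 0 < ‖c n‖ := fun n => lt_of_lt_of_le (by positivity) (hnorm n)
  have hlower : Tendsto (fun n : ℕ => -(1 / ((n : ℝ) + 1))) atTop (𝓝 0) := by
    simpa using (tendsto_one_div_add_atTop_nhds_zero_nat (𝕜 := ℝ)).neg
  refine ⟨c, hc, hnorm_top, tendsto_of_tendsto_of_tendsto_of_le_of_le hlower
    ((tendsto_const_nhds (x := s)).div_atTop hnorm_top) (fun n => ?_) (fun n => ?_)⟩
  · rw [map_smul, smul_eq_mul, ← div_eq_inv_mul, le_div_iff₀ (hpos n)]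
    linarith [hlt n, abs_nonneg s]
  · rw [map_smul, smul_eq_mul, ← div_eq_inv_mul]
    exact div_le_div_of_nonneg_right (hs _ (hc n)) (hpos n).le

theorem add_mul_norm_le_of_closedBall_subset {C : Set X} {h : X →L[ℝ] ℝ} {ρ N : ℝ} (hρ : 0 ≤ ρ)
    (hball : closedBall h ρ ⊆ {g | ∀ x ∈ C, g x ≤ N}) {x : X} (hx : x ∈ C) :
    h x + ρ * ‖x‖ ≤ N := by
  obtain ⟨k, hk, hkx⟩ := exists_dual_vector'' ℝ x
  have hmem : h + ρ • k ∈ closedBall h ρ := by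
    rw [mem_closedBall, dist_eq_norm, add_sub_cancel_left, norm_smul, Real.norm_of_nonneg hρ]
    exact mul_le_of_le_one_right hρ hk
  simpa [hkx] using hball hmem x hx

theorem exists_add_mul_norm_le_of_nonempty_interior_barrierCone {C : Set X}
    (hint : (interior (barrierCone C)).Nonempty) :
    ∃ h : X →L[ℝ] ℝ, ∃ ρ > 0, ∃ N : ℝ, ∀ x ∈ C, h x + ρ * ‖x‖ ≤ N := by
  set U := interior (barrierCone C)
  let A : ℕ → Set (X →L[ℝ] ℝ) := fun n => {g | ∀ x ∈ C, g x ≤ n}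
  have hA : ∀ n, IsClosed (A n ∪ Uᶜ) := fun n => by
    refine IsClosed.union ?_ isOpen_interior.isClosed_compl
    simp only [A, ofPred_forall]
    exact isClosed_biInter fun x _ =>
      isClosed_le (ContinuousLinearMap.apply ℝ ℝ x).continuous continuous_const
  have hcover : ⋃ n, (A n ∪ Uᶜ) = univ := by
    refine eq_univ_of_forall fun g => ?_
    by_cases hg : g ∈ U
    · obtain ⟨b, hb⟩ := interior_subset hg
      obtain ⟨n, hn⟩ := exists_nat_ge b
      exact mem_iUnion.2 ⟨n, Or.inl fun x hx => (hb x hx).trans hn⟩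
    · exact mem_iUnion.2 ⟨0, Or.inr hg⟩
  obtain ⟨h, hh, hhU⟩ :=
    (dense_iUnion_interior_of_closed hA hcover).exists_mem_open isOpen_interior hint
  obtain ⟨n, hn⟩ := mem_iUnion.1 hh
  obtain ⟨ρ, hρ, hball⟩ := Metric.isOpen_iff.1 (isOpen_interior.inter isOpen_interior) h ⟨hn, hhU⟩
  refine ⟨h, ρ / 2, half_pos hρ, n, fun x hx =>
    add_mul_norm_le_of_closedBall_subset (half_pos hρ).le (fun g hg => ?_) hx⟩
  obtain ⟨hgA, hgU⟩ := hball (closedBall_subset_ball (half_lt_self hρ) hg)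
  exact (interior_subset hgA).resolve_right (not_not.2 hgU)

theorem exists_forall_mapClusterPt_of_surjective_inclusionInDoubleDual
    (hsurj : Function.Surjective (inclusionInDoubleDual ℝ X)) {u : ℕ → X} {R : ℝ}
    (hu : ∀ n, ‖u n‖ ≤ R) :
    ∃ d : X, ∀ g : X →L[ℝ] ℝ, MapClusterPt (g d) atTop fun n => g (u n) := by
  let ξ : ℕ → WeakDual ℝ (StrongDual ℝ X) := fun n =>
    StrongDual.toWeakDual (inclusionInDoubleDual ℝ X (u n))
  have hξ : ∀ n, ξ n ∈ WeakDual.toStrongDual ⁻¹' closedBall 0 R := fun n => by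
    rw [mem_preimage, mem_closedBall]
    exact (dist_zero_right (inclusionInDoubleDual ℝ X (u n))).le.trans
      ((double_dual_bound ℝ X (u n)).trans (hu n))
  obtain ⟨ζ, -, hζ⟩ := (WeakDual.isCompact_closedBall 0 R).exists_mapClusterPt
    (f := atTop) (le_principal_iff.2 (Filter.mem_map.2 (Eventually.of_forall hξ)))
  obtain ⟨d, hd⟩ := hsurj (WeakDual.toStrongDual ζ)
  refine ⟨d, fun g => ?_⟩
  have := hζ.continuousAt_comp (WeakDual.eval_continuous g).continuousAt
  convert this using 1
  · rw [← dual_def ℝ X d g, hd]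
    rfl
  · funext n
    exact (dual_def ℝ X (u n) g).symm

theorem exists_ne_zero_forall_mapClusterPt_of_surjective_inclusionInDoubleDual {C : Set X}
    (hsurj : Function.Surjective (inclusionInDoubleDual ℝ X))
    (hint : (interior (barrierCone C)).Nonempty) {c : ℕ → X} (hc : ∀ n, c n ∈ C)
    (hnorm : Tendsto (fun n => ‖c n‖) atTop atTop) :
    ∃ d ≠ 0, ∀ g : X →L[ℝ] ℝ, MapClusterPt (g d) atTop fun n => g (‖c n‖⁻¹ • c n) := by
  obtain ⟨h, ρ, hρ, N, hN⟩ := exists_add_mul_norm_le_of_nonempty_interior_barrierCone hint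
  obtain ⟨d, hd⟩ := exists_forall_mapClusterPt_of_surjective_inclusionInDoubleDual hsurj
    (u := fun n => ‖c n‖⁻¹ • c n) fun n => norm_inv_norm_smul_le_one (c n)
  refine ⟨d, ?_, hd⟩
  rintro rfl
  have hlim : Tendsto (fun n => N / ‖c n‖ - ρ) atTop (𝓝 (0 - ρ)) :=
    ((tendsto_const_nhds (x := N)).div_atTop hnorm).sub_const ρ
  have hev : ∀ᶠ n in atTop, h (‖c n‖⁻¹ • c n) ∈ Iic (-(ρ / 2)) := by
    filter_upwards [hnorm.eventually_gt_atTop 0,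
      hlim.eventually (gt_mem_nhds (by linarith : 0 - ρ < -(ρ / 2)))] with n hn hlt
    rw [mem_Iic, map_smul, smul_eq_mul, ← div_eq_inv_mul]
    calc h (c n) / ‖c n‖ ≤ (N - ρ * ‖c n‖) / ‖c n‖ := by gcongr; linarith [hN _ (hc n)]
      _ = N / ‖c n‖ - ρ := by field_simp
      _ ≤ -(ρ / 2) := hlt.le
  have := isClosed_Iic.mem_of_mapClusterPt (hd h) hev
  rw [map_zero, mem_Iic] at this
  linarith

theorem exists_norm_eq_one_mapClusterPt_of_isCompact_inter_closedBall {C : Set X}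
    (hconv : Convex ℝ C) {c₀ : X} (hc₀ : c₀ ∈ C) {r : ℝ} (hr : 0 < r)
    (hK : IsCompact (C ∩ closedBall c₀ r)) {c : ℕ → X} (hc : ∀ n, c n ∈ C)
    (hnorm : Tendsto (fun n => ‖c n‖) atTop atTop) :
    ∃ d : X, ‖d‖ = 1 ∧ MapClusterPt d atTop fun n => ‖c n‖⁻¹ • c n := by
  have hdist := tendsto_norm_sub_atTop hnorm c₀
  let e : ℕ → X := fun n => ‖c n - c₀‖⁻¹ • (c n - c₀)
  have hK' : ∀ᶠ n in atTop, c₀ + r • e n ∈ C ∩ closedBall c₀ r := by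
    filter_upwards [hdist.eventually_ge_atTop r] with n hn
    refine ⟨hconv.add_smul_inv_norm_smul_sub_mem hc₀ (hc n) hr.le hn, ?_⟩
    rw [mem_closedBall, dist_eq_norm, add_sub_cancel_left, norm_smul, Real.norm_of_nonneg hr.le]
    exact mul_le_of_le_one_right hr.le (norm_inv_norm_smul_le_one _)
  obtain ⟨y, -, hy⟩ := hK.exists_mapClusterPt (f := atTop) (le_principal_iff.2 (mem_map.2 hK'))
  have he : MapClusterPt (r⁻¹ • (y - c₀)) atTop e := by
    convert hy.continuousAt_comp (f := fun z => r⁻¹ • (z - c₀)) (by fun_prop) using 1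
    funext n
    simp [e, smul_smul, inv_mul_cancel_left₀ hr.ne']
  have hd := he.of_tendsto_sub <|
    tendsto_inv_norm_smul_sub_inv_norm_smul hnorm (K := ‖c₀‖) fun n => by rw [sub_sub_cancel]
  exact ⟨_, norm_eq_one_of_mapClusterPt_inv_norm_smul hnorm hd, hd⟩

theorem exists_norm_eq_one_mapClusterPt_of_mem_ball_add_submodule {r : ℝ} {Z : Submodule ℝ X}
    [FiniteDimensional ℝ Z] {c : ℕ → X} (hc : ∀ n, c n ∈ ball (0 : X) r + (Z : Set X))
    (hnorm : Tendsto (fun n => ‖c n‖) atTop atTop) :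
    ∃ d : X, ‖d‖ = 1 ∧ MapClusterPt d atTop fun n => ‖c n‖⁻¹ • c n := by
  choose b hb z hz hbz using fun n => mem_add.1 (hc n)
  let w : ℕ → Z := fun n => ‖(⟨z n, hz n⟩ : Z)‖⁻¹ • ⟨z n, hz n⟩
  obtain ⟨v, -, hv⟩ := (isCompact_closedBall (0 : Z) 1).exists_mapClusterPt (f := atTop) (u := w)
    (le_principal_iff.2 (mem_map.2 (Eventually.of_forall fun n =>
      mem_closedBall_zero_iff.2 (norm_inv_norm_smul_le_one _))))
  have hz' : MapClusterPt (v : X) atTop fun n => ‖z n‖⁻¹ • z n :=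
    hv.continuousAt_comp continuous_subtype_val.continuousAt
  have hd := hz'.of_tendsto_sub <|
    tendsto_inv_norm_smul_sub_inv_norm_smul hnorm (K := r) fun n => by
      rw [← hbz n, add_sub_cancel_right]
      exact (mem_ball_zero_iff.1 (hb n)).le
  exact ⟨_, norm_eq_one_of_mapClusterPt_inv_norm_smul hnorm hd, hd⟩

end

/-- Let `C` be a nonempty closed convex subset of a real normed space `X` having
the strong separation property, satisfying one of the conditions
(A) `X` is a reflexive Banach space and `Int barc(C) ≠ ∅`,
(B) `C` is locally compact,
(C) `C ⊆ B(0; r) + Z` for some `r > 0` and finite-dimensional subspace `Z`.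
Then `barc(C) = Int barc(C) ∪ {0}`. -/
theorem statement7 {X : Type*} [NormedAddCommGroup X] [NormedSpace ℝ X]
    (C : Set X) (hne : C.Nonempty) (hcl : IsClosed C) (hconv : Convex ℝ C)
    (hsep : StrongSepProperty C)
    (hcond :
      (CompleteSpace X ∧ Function.Surjective (NormedSpace.inclusionInDoubleDual ℝ X) ∧
        (interior (barrierCone C)).Nonempty) ∨
      (∃ c₀ ∈ C, ∃ r > (0 : ℝ), IsCompact (C ∩ Metric.closedBall c₀ r)) ∨
      (∃ r > (0 : ℝ), ∃ Z : Submodule ℝ X, FiniteDimensional ℝ Z ∧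
        C ⊆ Metric.ball (0 : X) r + (Z : Set X))) :
    barrierCone C = interior (barrierCone C) ∪ {0} := by
  refine Subset.antisymm (fun f hf => or_iff_not_imp_right.2 fun hf0 => ?_) ?_
  · by_contra hint
    obtain ⟨p, hp, hmax⟩ := hsep.exists_isMaxOn hne hf0 hf
    obtain ⟨c, hc, hnorm, hfc⟩ := exists_seq_of_notMem_interior_barrierCone hf hint
    obtain ⟨d, hd0, hd⟩ :
        ∃ d ≠ 0, ∀ g : X →L[ℝ] ℝ, MapClusterPt (g d) atTop fun n => g (‖c n‖⁻¹ • c n) := by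
      rcases hcond with ⟨-, hsurj, hbarc⟩ | hlocal
      · exact exists_ne_zero_forall_mapClusterPt_of_surjective_inclusionInDoubleDual hsurj hbarc
          hc hnorm
      obtain ⟨d, hd1, hd⟩ : ∃ d : X, ‖d‖ = 1 ∧ MapClusterPt d atTop fun n => ‖c n‖⁻¹ • c n := by
        rcases hlocal with ⟨c₀, hc₀, r, hr, hK⟩ | ⟨r, -, Z, hZ, hCZ⟩
        · exact exists_norm_eq_one_mapClusterPt_of_isCompact_inter_closedBall hconv hc₀ hr hK hc
            hnorm
        · exact exists_norm_eq_one_mapClusterPt_of_mem_ball_add_submodule (fun n => hCZ (hc n))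
            hnorm
      exact ⟨d, norm_ne_zero_iff.1 (hd1 ▸ one_ne_zero),
        fun g => hd.continuousAt_comp g.continuous.continuousAt⟩
    have hfd : f d = 0 := eq_of_nhds_neBot ((hd f).clusterPt.mono hfc)
    exact hd0 <| hsep.eq_zero_of_isMaxOn_of_forall_add_smul_mem hf0 hmax hfd fun t ht =>
      hcl.add_smul_mem_of_forall_mapClusterPt hconv hp hc hnorm hd ht
  · rintro f (hf | rfl)
    · exact interior_subset hf
    · exact ⟨0, fun _ _ => le_rfl⟩
end

section
/- Let C be a nonempty unbounded closed convex subset of a real normed linear space X having the strong separation property, and assume at least one of the following conditions holds: (A) X is a reflexive Banach space and Int barc(C) ≠ ∅; (B) C is locally compact; (C) there exist r > 0 and a finite-dimensional linear subspace Z ⊆ X with C ⊆ B(0; r) + Z. Then the closure of the affine hull of C equals X. Furthermore, if C is finite-dimensional (i.e. aff(C) is finite-dimensional), then aff(C) = X and the interior of C is nonempty. -/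
open Filter Topology Pointwise

/-!
If the affine hull of `C` is not dense, Hahn–Banach gives a nonzero functional `f` that is
constant, say `k`, on `C`; pick `v` with `f v = 1`. By Banach–Steinhaus some functional `g` is
unbounded above on `C`. The set `D = {c + t • v | c ∈ C, exp (-g c) ≤ t}` is closed and convex,
and disjoint from `C` because `f > k` on it, yet it contains the points `c + exp (-g c) • v`,
which come arbitrarily close to `C`; so `C` and `D` cannot be strongly separated.
When the affine hull is finite-dimensional it is closed, hence all of `X`, and then `C` has
nonempty interior.
-/

open Set

section

variable {X : Type*}

theorem AffineSubspace.apply_eq_of_bddBelow_image [AddCommGroup X] [Module ℝ X]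
    (s : AffineSubspace ℝ X) (f : X →ₗ[ℝ] ℝ) (hf : BddBelow (f '' s)) {x y : X}
    (hx : x ∈ s) (hy : y ∈ s) : f x = f y := by
  by_contra hxy
  obtain ⟨B, hB⟩ := hf
  have hslope : f (y - x) ≠ 0 := by rw [map_sub]; exact sub_ne_zero.mpr (Ne.symm hxy)
  set t := (B - 1 - f x) / f (y - x)
  have hmem : t • (y -ᵥ x) +ᵥ x ∈ s := s.smul_vsub_vadd_mem t hy hx hx
  have hval : f (t • (y -ᵥ x) +ᵥ x) = B - 1 := by
    simp only [vsub_eq_sub, vadd_eq_add, map_add, map_smul, smul_eq_mul, t,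
      div_mul_cancel₀ _ hslope]
    ring
  linarith [hB ⟨_, hmem, hval⟩]

variable [NormedAddCommGroup X] [NormedSpace ℝ X]

theorem exists_dual_not_bddAbove_image_of_not_isBounded {C : Set X}
    (hC : ¬ Bornology.IsBounded C) : ∃ g : StrongDual ℝ X, ¬ BddAbove (g '' C) := by
  by_contra! h
  refine hC (isBounded_iff_forall_norm_le.mpr ?_)
  have hpt : ∀ f : StrongDual ℝ X, ∃ B, ∀ c : C,
      ‖NormedSpace.inclusionInDoubleDual ℝ X c f‖ ≤ B := by
    intro f
    obtain ⟨b₁, hb₁⟩ := h f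
    obtain ⟨b₂, hb₂⟩ := h (-f)
    refine ⟨max b₁ b₂, fun c => ?_⟩
    have h₁ := hb₁ ⟨c, c.2, rfl⟩
    have h₂ := hb₂ ⟨c, c.2, rfl⟩
    simp only [neg_apply] at h₂
    rw [NormedSpace.dual_def, Real.norm_eq_abs, abs_le]
    constructor <;> linarith [le_max_left b₁ b₂, le_max_right b₁ b₂]
  obtain ⟨B, hB⟩ := banach_steinhaus hpt
  refine ⟨B, fun x hx => ?_⟩
  rw [← (NormedSpace.inclusionInDoubleDualLi ℝ (E := X)).norm_map x]
  exact hB ⟨x, hx⟩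

theorem exists_ne_zero_forall_apply_eq_of_closure_affineSpan_ne_univ {C : Set X}
    (hC : C.Nonempty) (h : closure (affineSpan ℝ C : Set X) ≠ univ) :
    ∃ f : StrongDual ℝ X, f ≠ 0 ∧ ∃ k, ∀ c ∈ C, f c = k := by
  obtain ⟨x, hx⟩ := (ne_univ_iff_exists_notMem _).mp h
  obtain ⟨f, u, hfx, hfu⟩ :=
    geometric_hahn_banach_point_closed (affineSpan ℝ C).convex.closure isClosed_closure hx
  obtain ⟨c₀, hc₀⟩ := hC
  have hbdd : BddBelow ((f : X →ₗ[ℝ] ℝ) '' (affineSpan ℝ C)) := by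
    refine ⟨u, ?_⟩
    rintro _ ⟨y, hy, rfl⟩
    exact (hfu y (subset_closure hy)).le
  refine ⟨f, ?_, f c₀, fun c hc => ?_⟩
  · rintro rfl
    simp only [zero_apply] at hfx hfu
    linarith [hfu c₀ (subset_closure (subset_affineSpan ℝ C hc₀))]
  · exact (affineSpan ℝ C).apply_eq_of_bddBelow_image f hbdd
      (subset_affineSpan ℝ C hc) (subset_affineSpan ℝ C hc₀)

def epigraphAlong (C : Set X) (φ : X → ℝ) (v : X) : Set X :=
  (fun p : X × ℝ => p.1 + p.2 • v) '' {p | p.1 ∈ C ∧ φ p.1 ≤ p.2}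

section epigraphAlong

variable {C : Set X} {φ : X → ℝ} {v : X} {f : StrongDual ℝ X} {k : ℝ}

theorem mem_epigraphAlong_iff (hfv : f v = 1) (hfC : ∀ c ∈ C, f c = k) {z : X} :
    z ∈ epigraphAlong C φ v ↔ z - (f z - k) • v ∈ C ∧ φ (z - (f z - k) • v) ≤ f z - k := by
  constructor
  · rintro ⟨⟨c, t⟩, ⟨hc, ht⟩, rfl⟩
    have hheight : f (c + t • v) - k = t := by simp [hfv, hfC c hc]
    simpa only [hheight, add_sub_cancel_right] using And.intro hc ht
  · rintro ⟨hc, ht⟩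
    exact ⟨(_, _), ⟨hc, ht⟩, sub_add_cancel _ _⟩

theorem isClosed_epigraphAlong (hC : IsClosed C) (hφ : Continuous φ) (hfv : f v = 1)
    (hfC : ∀ c ∈ C, f c = k) : IsClosed (epigraphAlong C φ v) := by
  have hpre : epigraphAlong C φ v = (fun z => (z - (f z - k) • v, f z - k)) ⁻¹'
      {p : X × ℝ | p.1 ∈ C ∧ φ p.1 ≤ p.2} :=
    ext fun _ => mem_epigraphAlong_iff hfv hfC
  rw [hpre]
  exact ((hC.preimage continuous_fst).inter
    (isClosed_le (hφ.comp continuous_fst) continuous_snd)).preimage (by fun_prop)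

theorem convex_epigraphAlong (hφ : ConvexOn ℝ C φ) : Convex ℝ (epigraphAlong C φ v) :=
  hφ.convex_epigraph.linear_image (LinearMap.fst ℝ X ℝ + (LinearMap.snd ℝ X ℝ).smulRight v)

theorem disjoint_epigraphAlong (hfv : f v = 1) (hfC : ∀ c ∈ C, f c = k)
    (hφpos : ∀ c ∈ C, 0 < φ c) : Disjoint C (epigraphAlong C φ v) := by
  rw [disjoint_left]
  rintro _ hz ⟨⟨c, t⟩, ⟨hc, ht⟩, rfl⟩
  have hheight : f (c + t • v) = k + t := by simp [hfv, hfC c hc]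
  linarith [hfC _ hz, hφpos c hc]

theorem not_stronglySeparated_epigraphAlong (hφpos : ∀ c ∈ C, 0 < φ c)
    (hφinf : ∀ ε > 0, ∃ c ∈ C, φ c < ε) : ¬ StronglySeparated C (epigraphAlong C φ v) := by
  rintro ⟨F, -, a, b, hab, hFa, hFb⟩
  obtain ⟨c, hc, hφc⟩ := hφinf ((b - a) / (|F v| + 1)) (div_pos (sub_pos.2 hab) (by positivity))
  have hgap : φ c * (|F v| + 1) < b - a := (lt_div_iff₀ (by positivity)).mp hφc
  have hFD : b ≤ F c + φ c * F v := by simpa using hFb _ ⟨(c, φ c), ⟨hc, le_rfl⟩, rfl⟩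
  nlinarith [hFa c hc, hφpos c hc, le_abs_self (F v)]

theorem not_strongSepProperty_of_convexOn (hC : IsClosed C) (hfv : f v = 1)
    (hfC : ∀ c ∈ C, f c = k) (hφ : Continuous φ) (hφconv : ConvexOn ℝ C φ)
    (hφpos : ∀ c ∈ C, 0 < φ c) (hφinf : ∀ ε > 0, ∃ c ∈ C, φ c < ε) :
    ¬ StrongSepProperty C := by
  intro hsep
  obtain ⟨c, hc, -⟩ := hφinf 1 one_pos
  refine not_stronglySeparated_epigraphAlong hφpos hφinf (hsep _ ?_
    (isClosed_epigraphAlong hC hφ hfv hfC) (convex_epigraphAlong hφconv)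
    (disjoint_epigraphAlong hfv hfC hφpos))
  exact ⟨_, ⟨(c, φ c), ⟨hc, le_rfl⟩, rfl⟩⟩

end epigraphAlong

theorem not_strongSepProperty_of_not_bddAbove {C : Set X} (hC : IsClosed C)
    (hconv : Convex ℝ C) {f : StrongDual ℝ X} (hf : f ≠ 0) {k : ℝ} (hfC : ∀ c ∈ C, f c = k)
    {g : StrongDual ℝ X} (hg : ¬ BddAbove (g '' C)) : ¬ StrongSepProperty C := by
  obtain ⟨v, hfv⟩ := (f : X →ₗ[ℝ] ℝ).surjective_of_ne_zero
    (by rwa [Ne, ← ContinuousLinearMap.toLinearMap_zero, ContinuousLinearMap.coe_inj]) 1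
  refine not_strongSepProperty_of_convexOn (φ := fun x => Real.exp (-g x)) hC hfv hfC
    (by fun_prop) ?_ (fun _ _ => Real.exp_pos _) fun ε hε => ?_
  · exact (convexOn_exp.comp_linearMap (-g : X →ₗ[ℝ] ℝ)).subset (subset_univ _) hconv
  · obtain ⟨_, ⟨c, hc, rfl⟩, hlt⟩ := not_bddAbove_iff.mp hg (-Real.log ε)
    refine ⟨c, hc, ?_⟩
    calc Real.exp (-g c) < Real.exp (Real.log ε) := Real.exp_lt_exp.mpr (by linarith)
      _ = ε := Real.exp_log hε

end

theorem statement9_general {X : Type*} [NormedAddCommGroup X] [NormedSpace ℝ X]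
    (C : Set X) (hne : C.Nonempty) (hcl : IsClosed C) (hconv : Convex ℝ C)
    (hunbdd : ¬ Bornology.IsBounded C)
    (hsep : StrongSepProperty C) :
    closure ((affineSpan ℝ C : AffineSubspace ℝ X) : Set X) = Set.univ ∧
      (FiniteDimensional ℝ (affineSpan ℝ C).direction →
        affineSpan ℝ C = ⊤ ∧ (interior C).Nonempty) := by
  have hdense : closure ((affineSpan ℝ C : AffineSubspace ℝ X) : Set X) = univ := by
    by_contra h
    obtain ⟨f, hf, k, hfC⟩ := exists_ne_zero_forall_apply_eq_of_closure_affineSpan_ne_univ hne h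
    obtain ⟨g, hg⟩ := exists_dual_not_bddAbove_image_of_not_isBounded hunbdd
    exact not_strongSepProperty_of_not_bddAbove hcl hconv hf hfC hg hsep
  refine ⟨hdense, fun hfd => ?_⟩
  have htop : affineSpan ℝ C = ⊤ := by
    rw [← AffineSubspace.coe_eq_univ_iff,
      ← (affineSpan ℝ C).closed_of_finiteDimensional.closure_eq, hdense]
  have : FiniteDimensional ℝ X := by
    rw [htop, AffineSubspace.direction_top] at hfd
    exact Submodule.topEquiv.finiteDimensional
  exact ⟨htop, hconv.interior_nonempty_iff_affineSpan_eq_top.mpr htop⟩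

/-- Let `C` be a nonempty unbounded closed convex subset of a real normed space `X`
having the strong separation property, satisfying one of the conditions
(A) `X` is a reflexive Banach space and `Int barc(C) ≠ ∅`,
(B) `C` is locally compact,
(C) `C ⊆ B(0; r) + Z` for some `r > 0` and finite-dimensional subspace `Z`.
Then `closure (aff C) = X`; moreover, if `aff C` is finite-dimensional then `aff C = X` and
`Int C ≠ ∅`. -/
theorem statement9 {X : Type*} [NormedAddCommGroup X] [NormedSpace ℝ X]
    (C : Set X) (hne : C.Nonempty) (hcl : IsClosed C) (hconv : Convex ℝ C)
    (hunbdd : ¬ Bornology.IsBounded C)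
    (hsep : StrongSepProperty C)
    (hcond :
      (CompleteSpace X ∧ Function.Surjective (NormedSpace.inclusionInDoubleDual ℝ X) ∧
        (interior (barrierCone C)).Nonempty) ∨
      (∃ c₀ ∈ C, ∃ r > (0 : ℝ), IsCompact (C ∩ Metric.closedBall c₀ r)) ∨
      (∃ r > (0 : ℝ), ∃ Z : Submodule ℝ X, FiniteDimensional ℝ Z ∧
        C ⊆ Metric.ball (0 : X) r + (Z : Set X))) :
    closure ((affineSpan ℝ C : AffineSubspace ℝ X) : Set X) = Set.univ ∧
      (FiniteDimensional ℝ (affineSpan ℝ C).direction →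
        affineSpan ℝ C = ⊤ ∧ (interior C).Nonempty) :=
  statement9_general C hne hcl hconv hunbdd hsep
end

section
/- Let X be a real reflexive Banach space and let C ⊆ X be a nonempty closed convex set. If C has the separation property and barc(C) = Int barc(C) ∪ {0}, then C has the strong separation property. -/
/-- `C` and `D` are separated: there is a nonzero continuous linear functional whose supremum
over `C` is at most its infimum over `D`. -/
def Separated {X : Type*} [NormedAddCommGroup X] [NormedSpace ℝ X] (C D : Set X) : Prop :=
  ∃ f : X →L[ℝ] ℝ, f ≠ 0 ∧ ∃ a : ℝ, (∀ c ∈ C, f c ≤ a) ∧ ∀ d ∈ D, a ≤ f d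

/-- `C` has the separation property. -/
def SepProperty {X : Type*} [NormedAddCommGroup X] [NormedSpace ℝ X] (C : Set X) : Prop :=
  ∀ D : Set X, D.Nonempty → IsClosed D → Convex ℝ D → Disjoint C D → Separated C D

open Bornology Metric NormedSpace Pointwise Set Topology

section Separation

variable {X : Type*} [NormedAddCommGroup X] {C D : Set X}

theorem exists_disjoint_cthickening_of_zero_notMem_closure_sub
    (h : (0 : X) ∉ closure (C - D)) : ∃ r > 0, Disjoint C (cthickening r D) := by
  obtain ⟨r, hr, hball⟩ : ∃ r > 0, ∀ z ∈ C - D, r ≤ dist 0 z := by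
    simpa [Metric.mem_closure_iff] using h
  refine ⟨r / 2, half_pos hr, disjoint_left.mpr fun c hc hcD ↦ ?_⟩
  obtain ⟨d, hd, hcd⟩ := mem_thickening_iff.mp
    (cthickening_subset_thickening' hr (half_lt_self hr) D hcD)
  have := hball (c - d) (sub_mem_sub hc hd)
  rw [dist_zero_left, ← dist_eq_norm] at this
  linarith

variable [NormedSpace ℝ X]

theorem StronglySeparated.of_separated_cthickening {r : ℝ} (hr : 0 < r)
    (h : Separated C (cthickening r D)) : StronglySeparated C D := by
  obtain ⟨g, hg, b, hgC, hgD⟩ := h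
  obtain ⟨y, hy⟩ : ∃ y, g y ≠ 0 := by simpa using DFunLike.ne_iff.mp hg
  have hy0 : y ≠ 0 := by rintro rfl; simp at hy
  set v : X := (r * ‖y‖⁻¹) • y
  have hv : ‖v‖ = r := by simpa using norm_smul_inv_norm' (𝕜 := ℝ) hr.le hy0
  have hgv : g v ≠ 0 := by simp [v, hr.ne', hy0, hy]
  refine ⟨g, hg, b, b + |g v|, by simpa using hgv, hgC, fun d hd ↦ ?_⟩
  have hadd := hgD (d + v) (mem_cthickening_of_dist_le _ d r D hd (by simp [hv]))
  have hsub := hgD (d - v) (mem_cthickening_of_dist_le _ d r D hd (by simp [hv]))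
  rw [map_add] at hadd
  rw [map_sub] at hsub
  cases abs_cases (g v) <;> linarith

end Separation

section Boundedness

variable {X : Type*} [NormedAddCommGroup X] [NormedSpace ℝ X]

theorem isBounded_of_forall_bddAbove_image {S : Set X}
    (h : ∀ g : X →L[ℝ] ℝ, BddAbove (g '' S)) : IsBounded S := by
  have hbound (g : X →L[ℝ] ℝ) : ∃ M, ∀ x : S, ‖inclusionInDoubleDual ℝ X x g‖ ≤ M := by
    obtain ⟨M₁, hM₁⟩ := h g
    obtain ⟨M₂, hM₂⟩ := h (-g)
    refine ⟨max M₁ M₂, fun x ↦ abs_le.mpr ⟨?_, (hM₁ ⟨x, x.2, rfl⟩).trans (le_max_left _ _)⟩⟩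
    have : -g x ≤ M₂ := hM₂ ⟨x, x.2, rfl⟩
    show -max M₁ M₂ ≤ g x
    linarith [le_max_right M₁ M₂]
  obtain ⟨M, hM⟩ := banach_steinhaus hbound
  refine isBounded_iff_forall_norm_le.mpr ⟨M, fun x hx ↦ ?_⟩
  exact (inclusionInDoubleDualLi ℝ).norm_map x ▸ hM ⟨x, hx⟩

theorem exists_pos_add_smul_mem_of_mem_interior {E : Type*} [AddCommGroup E] [Module ℝ E]
    [TopologicalSpace E] [ContinuousAdd E] [ContinuousSMul ℝ E] {s : Set E} {f : E}
    (hf : f ∈ interior s) (g : E) : ∃ t : ℝ, 0 < t ∧ f + t • g ∈ s := by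
  have hcont : Continuous fun t : ℝ ↦ f + t • g := by fun_prop
  have hev : ∀ᶠ t in 𝓝[>] (0 : ℝ), f + t • g ∈ s :=
    nhdsWithin_le_nhds <| hcont.tendsto' 0 f (by simp) (mem_interior_iff_mem_nhds.mp hf)
  obtain ⟨t, ht, hts⟩ := (hev.and eventually_mem_nhdsWithin).exists
  exact ⟨t, hts, ht⟩

theorem bddAbove_image_of_mem_interior_barrierCone {C : Set X} {f : X →L[ℝ] ℝ}
    (hf : f ∈ interior (barrierCone C)) (a : ℝ) (g : X →L[ℝ] ℝ) :
    BddAbove (g '' {x ∈ C | a ≤ f x}) := by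
  obtain ⟨t, ht, b, hb⟩ := exists_pos_add_smul_mem_of_mem_interior hf g
  refine ⟨(b - a) / t, forall_mem_image.mpr fun x ⟨hxC, hax⟩ ↦ ?_⟩
  have := hb x hxC
  simp only [add_apply, smul_apply, smul_eq_mul] at this
  rw [le_div_iff₀ ht]
  linarith

theorem isBounded_superlevel_of_mem_interior_barrierCone {C : Set X} {f : X →L[ℝ] ℝ}
    (hf : f ∈ interior (barrierCone C)) (a : ℝ) : IsBounded {x ∈ C | a ≤ f x} :=
  isBounded_of_forall_bddAbove_image (bddAbove_image_of_mem_interior_barrierCone hf a)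

end Boundedness

section Reflexive

variable {X : Type*} [NormedAddCommGroup X] [NormedSpace ℝ X]

theorem Convex.isClosed_toWeakSpace_image {S : Set X} (hconv : Convex ℝ S) (hcl : IsClosed S) :
    IsClosed (toWeakSpace ℝ X '' S) := by
  rw [← closure_eq_iff_isClosed, ← hconv.toWeakSpace_closure ℝ, hcl.closure_eq]

theorem isCompact_toWeakSpace_image_of_surjective_inclusionInDoubleDual
    (hrefl : Function.Surjective (inclusionInDoubleDual ℝ X)) {S : Set X}
    (hb : IsBounded S) (hcl : IsClosed S) (hconv : Convex ℝ S) :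
    IsCompact (toWeakSpace ℝ X '' S) := by
  rw [← (hconv.isClosed_toWeakSpace_image hcl).closure_eq]
  refine isCompact_closure_of_isBounded ℝ X _ ?_ fun w _ ↦ ?_
  · rwa [preimage_image_eq _ (toWeakSpace ℝ X).injective]
  · obtain ⟨x, hx⟩ := hrefl (WeakDual.toStrongDual w)
    exact ⟨toWeakSpace ℝ X x, DFunLike.ext _ _ fun g ↦ DFunLike.congr_fun hx g⟩

theorem isClosed_sub_of_surjective_inclusionInDoubleDual
    (hrefl : Function.Surjective (inclusionInDoubleDual ℝ X)) {S D : Set X}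
    (hSb : IsBounded S) (hScl : IsClosed S) (hSconv : Convex ℝ S)
    (hDcl : IsClosed D) (hDconv : Convex ℝ D) :
    IsClosed (S - D) := by
  have hweak : IsClosed (toWeakSpace ℝ X '' S + -(toWeakSpace ℝ X '' D)) :=
    (hDconv.isClosed_toWeakSpace_image hDcl).neg.add_left_of_isCompact
      (isCompact_toWeakSpace_image_of_surjective_inclusionInDoubleDual hrefl hSb hScl hSconv)
  rw [← sub_eq_add_neg, ← image_sub] at hweak
  exact preimage_image_eq (S - D) (toWeakSpace ℝ X).injective ▸
    hweak.preimage (toWeakSpaceCLM ℝ X).continuous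

end Reflexive

theorem zero_mem_closure_superlevel_sub {X : Type*} [NormedAddCommGroup X] [NormedSpace ℝ X]
    {C D : Set X} {f : X →L[ℝ] ℝ} {a : ℝ} (hfD : ∀ d ∈ D, a ≤ f d)
    (h0 : (0 : X) ∈ closure (C - D)) : (0 : X) ∈ closure ({x ∈ C | a - 1 ≤ f x} - D) := by
  have hU : IsOpen {z : X | -1 < f z} := isOpen_lt continuous_const f.continuous
  refine closure_mono ?_ (hU.inter_closure ⟨by simp, h0⟩)
  rintro _ ⟨hz, c, hc, d, hd, rfl⟩
  have := hfD d hd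
  simp only [mem_ofPred_eq, map_sub] at hz
  exact sub_mem_sub ⟨hc, by linarith⟩ hd

theorem statement10_general {X : Type*} [NormedAddCommGroup X] [NormedSpace ℝ X]
    (hrefl : Function.Surjective (NormedSpace.inclusionInDoubleDual ℝ X))
    (C : Set X) (hcl : IsClosed C) (hconv : Convex ℝ C)
    (hsep : SepProperty C)
    (hbar : barrierCone C = interior (barrierCone C) ∪ {0}) :
    StrongSepProperty C := by
  intro D hDne hDcl hDconv hdisj
  by_cases h0 : (0 : X) ∈ closure (C - D)
  swap
  · obtain ⟨r, hr, hCr⟩ := exists_disjoint_cthickening_of_zero_notMem_closure_sub h0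
    exact .of_separated_cthickening hr <| hsep _ (hDne.mono (self_subset_cthickening D))
      isClosed_cthickening (hDconv.cthickening r) hCr
  exfalso
  obtain ⟨f, hf0, a, hfC, hfD⟩ := hsep D hDne hDcl hDconv hdisj
  have hf : f ∈ interior (barrierCone C) := by
    have : f ∈ barrierCone C := ⟨a, hfC⟩
    rw [hbar] at this
    exact this.resolve_right hf0
  set S := {x ∈ C | a - 1 ≤ f x}
  have hSD : IsClosed (S - D) :=
    isClosed_sub_of_surjective_inclusionInDoubleDual hrefl
      (isBounded_superlevel_of_mem_interior_barrierCone hf _)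
      (hcl.inter (isClosed_le continuous_const f.continuous))
      (hconv.inter (convex_halfSpace_ge f.isLinear _)) hDcl hDconv
  obtain ⟨c, hc, d, hd, hcd⟩ := hSD.closure_eq ▸ zero_mem_closure_superlevel_sub hfD h0
  exact disjoint_left.mp hdisj hc.1 (sub_eq_zero.mp hcd ▸ hd)

/-- In a real reflexive Banach space, a nonempty closed convex set with the
separation property such that `barc(C) = Int barc(C) ∪ {0}` has the strong separation
property. -/
theorem statement10 {X : Type*} [NormedAddCommGroup X] [NormedSpace ℝ X] [CompleteSpace X]
    (hrefl : Function.Surjective (NormedSpace.inclusionInDoubleDual ℝ X))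
    (C : Set X) (hne : C.Nonempty) (hcl : IsClosed C) (hconv : Convex ℝ C)
    (hsep : SepProperty C)
    (hbar : barrierCone C = interior (barrierCone C) ∪ {0}) :
    StrongSepProperty C :=
  statement10_general hrefl C hcl hconv hsep hbar
end

section
/- In the real Banach space ℓ¹, let C = {(x_n) ∈ ℓ¹ : Σ_{n=1}^∞ x_n = 1 and x_n ≥ 0 for all n} and D = {(y_n) ∈ ℓ¹ : Σ_{n=1}^∞ n·y_n/(n+1) = 1 and y_n ≥ 0 for all n}. Then C and D are disjoint nonempty bounded closed convex subsets of ℓ¹ and inf{‖ξ − ζ‖₁ : ξ ∈ C, ζ ∈ D} = 0; in particular, C and D are not strongly separated. -/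
open Filter Topology

/-!
Both sets are slices `{ξ ≥ 0 : ∑ w k * ξ k = 1}` of the positive cone of `ℓ¹`: for `C` the weights
are `1`, for `D` they are `(k+1)/(k+2) ∈ [1/2, 1)`. Pairing with a bounded weight sequence is a
continuous linear functional on `ℓ¹`, so such slices are closed and convex, and they lie in the ball
of radius `1/c` when the weights are bounded below by `c > 0`. Since the weights of `D` are strictly
smaller than those of `C`, no point lies in both. The basis vectors `e k ∈ C` and `e k / w k ∈ D`
are at distance `1 / w k - 1 → 0`, so the sets are at distance zero, and a functional separating
them strongly would have to jump by a fixed positive amount across arbitrarily short segments.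
-/

open scoped lp

namespace lp

variable {α : Type*}

theorem summable_norm_apply (ξ : ℓ¹(α, ℝ)) : Summable fun k => ‖ξ k‖ := by
  simpa using (lp.memℓp ξ).summable (by norm_num)

theorem norm_eq_tsum_norm (ξ : ℓ¹(α, ℝ)) : ‖ξ‖ = ∑' k, ‖ξ k‖ := by
  rw [norm_eq_tsum_rpow (by norm_num)]
  simp

theorem norm_eq_tsum_of_nonneg {ξ : ℓ¹(α, ℝ)} (hξ : ∀ k, 0 ≤ ξ k) : ‖ξ‖ = ∑' k, ξ k := by
  simp [norm_eq_tsum_norm, Real.norm_of_nonneg (hξ _)]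

variable {w : α → ℝ} {M : ℝ}

theorem norm_mul_apply_le (hw : ∀ k, ‖w k‖ ≤ M) (ξ : ℓ¹(α, ℝ)) (k : α) :
    ‖w k * ξ k‖ ≤ M * ‖ξ k‖ := by
  rw [norm_mul]; gcongr; exact hw k

theorem summable_mul_of_bounded (hw : ∀ k, ‖w k‖ ≤ M) (ξ : ℓ¹(α, ℝ)) :
    Summable fun k => w k * ξ k :=
  .of_norm_bounded ((summable_norm_apply ξ).mul_left M) (norm_mul_apply_le hw ξ)

theorem norm_tsum_mul_le (hw : ∀ k, ‖w k‖ ≤ M) (ξ : ℓ¹(α, ℝ)) :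
    ‖∑' k, w k * ξ k‖ ≤ M * ‖ξ‖ := by
  rw [norm_eq_tsum_norm, ← tsum_mul_left]
  exact tsum_of_norm_bounded ((summable_norm_apply ξ).mul_left M).hasSum (norm_mul_apply_le hw ξ)

variable (w) in
noncomputable def weightedTsumCLM (hw : ∀ k, ‖w k‖ ≤ M) : ℓ¹(α, ℝ) →L[ℝ] ℝ :=
  LinearMap.mkContinuous
    { toFun ξ := ∑' k, w k * ξ k
      map_add' ξ ζ := by
        simp only [coeFn_add, Pi.add_apply, mul_add]
        exact (summable_mul_of_bounded hw ξ).tsum_add (summable_mul_of_bounded hw ζ)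
      map_smul' c ξ := by
        simp only [coeFn_smul, Pi.smul_apply, smul_eq_mul, RingHom.id_apply, mul_left_comm _ c]
        exact tsum_mul_left }
    M (norm_tsum_mul_le hw)

end lp

section WeightedSimplex

variable {α : Type*}

def weightedSimplex (w : α → ℝ) : Set ℓ¹(α, ℝ) :=
  {ξ | ∑' k, w k * ξ k = 1 ∧ ∀ k, 0 ≤ ξ k}

variable {w : α → ℝ}

-- A non-summable series has `tsum` equal to `0`, not `1`.
theorem summable_of_mem_weightedSimplex {ξ : ℓ¹(α, ℝ)} (hξ : ξ ∈ weightedSimplex w) :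
    Summable fun k => w k * ξ k := by
  by_contra h
  exact zero_ne_one (tsum_eq_zero_of_not_summable h ▸ hξ.1)

theorem convex_weightedSimplex (w : α → ℝ) : Convex ℝ (weightedSimplex w) := by
  rintro ξ hξ ζ hζ a b ha hb hab
  simp only [weightedSimplex, Set.mem_ofPred_eq, lp.coeFn_add, lp.coeFn_smul, Pi.add_apply,
    Pi.smul_apply, smul_eq_mul]
  refine ⟨?_, fun k => add_nonneg (mul_nonneg ha (hξ.2 k)) (mul_nonneg hb (hζ.2 k))⟩
  calc ∑' k, w k * (a * ξ k + b * ζ k) = a * ∑' k, w k * ξ k + b * ∑' k, w k * ζ k := by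
        rw [← tsum_mul_left, ← tsum_mul_left, ← Summable.tsum_add
          ((summable_of_mem_weightedSimplex hξ).mul_left a)
          ((summable_of_mem_weightedSimplex hζ).mul_left b)]
        congr 1 with k
        ring
    _ = 1 := by rw [hξ.1, hζ.1, mul_one, mul_one, hab]

theorem isClosed_weightedSimplex {M : ℝ} (hw : ∀ k, ‖w k‖ ≤ M) :
    IsClosed (weightedSimplex w) := by
  have hcone : IsClosed {ξ : ℓ¹(α, ℝ) | ∀ k, 0 ≤ ξ k} := by
    rw [Set.ofPred_forall]
    exact isClosed_iInter fun k =>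
      isClosed_le continuous_const (lp.evalCLM ℝ (fun _ : α => ℝ) 1 k).continuous
  exact (isClosed_singleton.preimage (lp.weightedTsumCLM w hw).continuous).inter hcone

theorem weightedSimplex_subset_closedBall {c : ℝ} (hc : 0 < c) (hwc : ∀ k, c ≤ w k) :
    weightedSimplex w ⊆ Metric.closedBall 0 c⁻¹ := by
  intro ξ hξ
  rw [mem_closedBall_zero_iff, lp.norm_eq_tsum_of_nonneg hξ.2, ← mul_one c⁻¹, le_inv_mul_iff₀ hc]
  calc c * ∑' k, ξ k = ∑' k, c * ξ k := tsum_mul_left.symm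
    _ ≤ ∑' k, w k * ξ k :=
        Summable.tsum_le_tsum (fun k => mul_le_mul_of_nonneg_right (hwc k) (hξ.2 k))
          ((lp.memℓp ξ).summable_of_one.mul_left c) (summable_of_mem_weightedSimplex hξ)
    _ = 1 := hξ.1

theorem disjoint_weightedSimplex_of_lt {v : α → ℝ} (hvw : ∀ k, v k < w k) :
    Disjoint (weightedSimplex v) (weightedSimplex w) := by
  refine Set.disjoint_left.mpr fun ξ hv hw => ?_
  obtain ⟨k, hk⟩ : ∃ k, 0 < ξ k := by
    by_contra! h
    have hξ : ∀ k, ξ k = 0 := fun k => le_antisymm (h k) (hv.2 k)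
    simpa [hξ] using hv.1
  have := Summable.tsum_lt_tsum (fun k => mul_le_mul_of_nonneg_right (hvw k).le (hv.2 k))
    (mul_lt_mul_of_pos_right (hvw k) hk) (summable_of_mem_weightedSimplex hv)
    (summable_of_mem_weightedSimplex hw)
  rw [hv.1, hw.1] at this
  exact lt_irrefl _ this

theorem single_inv_mem_weightedSimplex [DecidableEq α] {k : α} (hk : 0 < w k) :
    lp.single 1 k (w k)⁻¹ ∈ weightedSimplex w := by
  refine ⟨?_, fun j => ?_⟩
  · rw [tsum_eq_single k fun j hj => by simp [lp.single_apply, hj]]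
    simp [hk.ne']
  · rw [lp.single_apply, Pi.single_apply]
    split_ifs with h
    · subst h; positivity
    · exact le_rfl

theorem exists_norm_sub_lt_of_tendsto {v : α → ℝ} {l : Filter α} [l.NeBot] {a : ℝ} (ha : a ≠ 0)
    (hv0 : ∀ k, 0 < v k) (hw0 : ∀ k, 0 < w k) (hv : Tendsto v l (𝓝 a))
    (hw : Tendsto w l (𝓝 a)) :
    ∀ ε > (0 : ℝ), ∃ ξ ∈ weightedSimplex v, ∃ ζ ∈ weightedSimplex w, ‖ξ - ζ‖ < ε := by
  classical
  intro ε hε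
  have hlim : Tendsto (fun k => (v k)⁻¹ - (w k)⁻¹) l (𝓝 0) := by
    simpa using (hv.inv₀ ha).sub (hw.inv₀ ha)
  obtain ⟨k, hk⟩ := (hlim.eventually (Metric.ball_mem_nhds 0 hε)).exists
  refine ⟨_, single_inv_mem_weightedSimplex (hv0 k), _, single_inv_mem_weightedSimplex (hw0 k), ?_⟩
  rw [← lp.single_sub, lp.norm_single (by norm_num)]
  simpa using hk

end WeightedSimplex

theorem not_stronglySeparated_of_forall_exists_norm_sub_lt {X : Type*} [NormedAddCommGroup X]
    [NormedSpace ℝ X] {C D : Set X} (h : ∀ ε > (0 : ℝ), ∃ c ∈ C, ∃ d ∈ D, ‖c - d‖ < ε) :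
    ¬ StronglySeparated C D := by
  rintro ⟨f, hf, a, b, hab, hCa, hDb⟩
  have hf_pos : 0 < ‖f‖ := norm_pos_iff.mpr hf
  obtain ⟨c, hc, d, hd, hcd⟩ := h ((b - a) / ‖f‖) (div_pos (sub_pos.mpr hab) hf_pos)
  have : b - a ≤ ‖f‖ * ‖c - d‖ :=
    calc b - a ≤ f d - f c := by linarith [hCa c hc, hDb d hd]
      _ = f (d - c) := (map_sub f d c).symm
      _ ≤ ‖f‖ * ‖d - c‖ := (le_abs_self _).trans (f.le_opNorm _)
      _ = ‖f‖ * ‖c - d‖ := by rw [norm_sub_rev]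
  exact hcd.not_ge ((div_le_iff₀' hf_pos).mpr this)

-- Sequences are indexed from `0`, so the paper's weights `n / (n + 1)` become `(k + 1) / (k + 2)`.
/-- In `ℓ¹`, the sets
`C = {(x_n) : Σ x_n = 1, x_n ≥ 0}` and `D = {(y_n) : Σ n·y_n/(n+1) = 1, y_n ≥ 0}`
(indices starting at `1` in the paper; here sequences are indexed by `ℕ` starting at `0`, so
the weights in `D` are `(k+1)/(k+2)`) are disjoint nonempty bounded closed convex sets with
`inf{‖ξ - ζ‖₁ : ξ ∈ C, ζ ∈ D} = 0`; in particular they are not strongly separated. -/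
theorem statement19
    (C D : Set (lp (fun _ : ℕ => ℝ) 1))
    (hC : C = {ξ : lp (fun _ : ℕ => ℝ) 1 |
      (∑' k : ℕ, ξ k) = 1 ∧ ∀ k, 0 ≤ ξ k})
    (hD : D = {ζ : lp (fun _ : ℕ => ℝ) 1 |
      (∑' k : ℕ, ((k : ℝ) + 1) / ((k : ℝ) + 2) * ζ k) = 1 ∧ ∀ k, 0 ≤ ζ k}) :
    Disjoint C D ∧ C.Nonempty ∧ D.Nonempty ∧
      Bornology.IsBounded C ∧ Bornology.IsBounded D ∧
      IsClosed C ∧ IsClosed D ∧ Convex ℝ C ∧ Convex ℝ D ∧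
      (∀ ε > (0 : ℝ), ∃ ξ ∈ C, ∃ ζ ∈ D, ‖ξ - ζ‖ < ε) ∧
      ¬ StronglySeparated C D := by
  set w : ℕ → ℝ := fun k => ((k : ℝ) + 1) / ((k : ℝ) + 2)
  have hC' : C = weightedSimplex fun _ => 1 := by simp only [hC, weightedSimplex, one_mul]
  have hD' : D = weightedSimplex w := hD
  have hw_pos (k : ℕ) : 0 < w k := by positivity
  have hw_lt_one (k : ℕ) : w k < 1 := (div_lt_one (by positivity)).mpr (by linarith)
  have hw_ge_half (k : ℕ) : 2⁻¹ ≤ w k := by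
    rw [le_div_iff₀ (by positivity)]
    linarith [(k.cast_nonneg : (0 : ℝ) ≤ k)]
  have hw_norm (k : ℕ) : ‖w k‖ ≤ 1 := by
    rw [Real.norm_of_nonneg (hw_pos k).le]
    exact (hw_lt_one k).le
  have hw_lim : Tendsto w atTop (𝓝 1) := by
    refine ((tendsto_natCast_div_add_atTop (1 : ℝ)).comp (tendsto_add_atTop_nat 1)).congr
      fun k => ?_
    simp only [Function.comp_apply, w]
    push_cast
    ring
  have happrox := exists_norm_sub_lt_of_tendsto one_ne_zero (fun _ => one_pos) hw_pos
    tendsto_const_nhds hw_lim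
  subst hC' hD'
  exact ⟨(disjoint_weightedSimplex_of_lt hw_lt_one).symm,
    ⟨_, single_inv_mem_weightedSimplex (k := 0) one_pos⟩,
    ⟨_, single_inv_mem_weightedSimplex (hw_pos 0)⟩,
    Metric.isBounded_closedBall.subset (weightedSimplex_subset_closedBall one_pos fun _ => le_rfl),
    Metric.isBounded_closedBall.subset (weightedSimplex_subset_closedBall (by norm_num) hw_ge_half),
    isClosed_weightedSimplex fun _ => norm_one.le, isClosed_weightedSimplex hw_norm,
    convex_weightedSimplex _, convex_weightedSimplex w, happrox,
    not_stronglySeparated_of_forall_exists_norm_sub_lt happrox⟩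
end
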